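/- Monotonicity of Δ_{u,v}, Property 1 (Lemma 3(1)): let V : 𝒬 → ℝ be monotone and let u, v ∈ 𝒰 with u_0 = m for some content m ∈ M_0. If Q¹, Q² ∈ 𝒬 satisfy Q¹_{n′,m′} = Q²_{n′,m′} for all (n′,m′) ∈ I outside the set {(0,m)} ∪ {(n,m) : n ∈ N_m}, and Q¹_{n′,m′} ≥ Q²_{n′,m′} on that set, then Δ_{u,v}(Q¹) ≤ Δ_{u,v}(Q²); i.e., Δ_{u,v}(Q) is monotonically non-increasing in Q_{0,m} and in Q_{n,m} for every n ∈ N_m. -/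

import Mathlib

/-!
The stage cost splits as `d(Q) + w·p(u)`, and `d(Q)` cancels in `Δ_{u,v}(Q)`, so only the
expected continuation values depend on `Q`. Since `u` lets the MBS transmit content `m`, it
serves every queue `(n,m)`; these are the only coordinates in which `Q¹` and `Q²` differ, and
served queues forget their past, so `T(Q¹,u,A) = T(Q²,u,A)`. The transition is monotone in `Q`,
so `T(Q²,v,A) ⪯ T(Q¹,v,A)` and monotonicity of `V` gives the inequality.
-/

open Finset

namespace HetNet

/-- The queue index set `I = {(n,m) : 0 ≤ n ≤ N, m ∈ M_n}`. -/
abbrev Idx {N M : ℕ} (cache : Fin (N + 1) → Finset (Fin M)) : Type :=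
  {p : Fin (N + 1) × Fin M // p.2 ∈ cache p.1}

/-- The feasible action space `𝒰`: each BS schedules a cached content or idles (`none`),
and the MBS (BS `0`) and the SBSs do not operate concurrently. -/
def Feasible {N M : ℕ} (cache : Fin (N + 1) → Finset (Fin M))
    (u : Fin (N + 1) → Option (Fin M)) : Prop :=
  (∀ n m, u n = some m → m ∈ cache n) ∧ (u 0 ≠ none → ∀ n, n ≠ 0 → u n = none)

instance {N M : ℕ} (cache : Fin (N + 1) → Finset (Fin M)) :
    DecidablePred (Feasible cache) := by
  intro u; unfold Feasible; infer_instance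

instance {N M : ℕ} (cache : Fin (N + 1) → Finset (Fin M)) :
    Nonempty {u : Fin (N + 1) → Option (Fin M) // Feasible cache u} :=
  ⟨⟨fun _ => none, fun _ _ h => by simp at h, fun h => absurd rfl h⟩⟩

/-- Queue `(n,m)` is served by action `u`. -/
def Served {N M : ℕ} (u : Fin (N + 1) → Option (Fin M)) (n : Fin (N + 1)) (m : Fin M) : Prop :=
  (n = 0 ∧ u 0 = some m) ∨ (n ≠ 0 ∧ (u 0 = some m ∨ u n = some m))

instance {N M : ℕ} (u : Fin (N + 1) → Option (Fin M)) (n : Fin (N + 1)) (m : Fin M) :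
    Decidable (Served u n m) := by unfold Served; infer_instance

/-- The queue transition map `T(Q,u,A)`. -/
def T {N M : ℕ} {cache : Fin (N + 1) → Finset (Fin M)} (bound : Idx cache → ℕ)
    (Q : Idx cache → ℕ) (u : Fin (N + 1) → Option (Fin M)) (A : Idx cache → ℕ) :
    Idx cache → ℕ := fun i =>
  if Served u i.val.1 i.val.2 then min (A i) (bound i) else min (Q i + A i) (bound i)

/-- The network power cost `p(u) = Σ_n p(n, u_n)` (with `p(n,0) = 0` for an idling BS). -/
def pcost {N M : ℕ} (p : Fin (N + 1) → Fin M → ℝ) (u : Fin (N + 1) → Option (Fin M)) : ℝ :=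
  ∑ n, (u n).elim 0 (p n)

/-- The sum request queue length `d(Q)`. -/
def dcost {N M : ℕ} {cache : Fin (N + 1) → Finset (Fin M)} (Q : Idx cache → ℕ) : ℝ :=
  ∑ i, (Q i : ℝ)

/-- The per-stage cost `g(Q,u) = d(Q) + w·p(u)`. -/
def gcost {N M : ℕ} (p : Fin (N + 1) → Fin M → ℝ) (w : ℝ)
    {cache : Fin (N + 1) → Finset (Fin M)}
    (Q : Idx cache → ℕ) (u : Fin (N + 1) → Option (Fin M)) : ℝ :=
  dcost Q + w * pcost p u

/-- The state-action cost `J_V(Q,u) = g(Q,u) + Σ_{A∈𝒜} P(A)·V(T(Q,u,A))`. -/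
def Jcost {N M : ℕ} (p : Fin (N + 1) → Fin M → ℝ) (w : ℝ)
    {cache : Fin (N + 1) → Finset (Fin M)} (bound : Idx cache → ℕ)
    {ι : Type} [Fintype ι] (P : ι → ℝ) (A : ι → Idx cache → ℕ)
    (V : (Idx cache → ℕ) → ℝ) (Q : Idx cache → ℕ)
    (u : Fin (N + 1) → Option (Fin M)) : ℝ :=
  gcost p w Q u + ∑ a, P a * V (T bound Q u (A a))

section

variable {N M : ℕ} {cache : Fin (N + 1) → Finset (Fin M)}

theorem served_of_MBS {u : Fin (N + 1) → Option (Fin M)} {m : Fin M} (hu0 : u 0 = some m)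
    (n : Fin (N + 1)) : Served u n m := by
  by_cases hn : n = 0
  · exact Or.inl ⟨hn, hu0⟩
  · exact Or.inr ⟨hn, Or.inl hu0⟩

theorem T_le_bound (bound : Idx cache → ℕ) (Q : Idx cache → ℕ)
    (u : Fin (N + 1) → Option (Fin M)) (A : Idx cache → ℕ) (i : Idx cache) :
    T bound Q u A i ≤ bound i := by
  unfold T
  split <;> exact min_le_right _ _

theorem T_mono (bound : Idx cache → ℕ) {Q₁ Q₂ : Idx cache → ℕ} (hQ : ∀ i, Q₁ i ≤ Q₂ i)
    (u : Fin (N + 1) → Option (Fin M)) (A : Idx cache → ℕ) (i : Idx cache) :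
    T bound Q₁ u A i ≤ T bound Q₂ u A i := by
  unfold T
  split
  · exact le_rfl
  · exact min_le_min_right _ (Nat.add_le_add_right (hQ i) _)

theorem T_eq_of_eq_of_not_served (bound : Idx cache → ℕ) {Q₁ Q₂ : Idx cache → ℕ}
    {u : Fin (N + 1) → Option (Fin M)}
    (hQ : ∀ i : Idx cache, ¬Served u i.val.1 i.val.2 → Q₁ i = Q₂ i) (A : Idx cache → ℕ) :
    T bound Q₁ u A = T bound Q₂ u A := by
  funext i
  unfold T
  by_cases hs : Served u i.val.1 i.val.2
  · simp only [hs, if_true]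
  · simp only [hs, if_false, hQ i hs]

theorem Jcost_sub_Jcost (p : Fin (N + 1) → Fin M → ℝ) (w : ℝ) (bound : Idx cache → ℕ)
    {ι : Type} [Fintype ι] (P : ι → ℝ) (A : ι → Idx cache → ℕ)
    (V : (Idx cache → ℕ) → ℝ) (Q : Idx cache → ℕ) (u v : Fin (N + 1) → Option (Fin M)) :
    Jcost p w bound P A V Q u - Jcost p w bound P A V Q v =
      w * (pcost p u - pcost p v) +
        (∑ a, P a * V (T bound Q u (A a)) - ∑ a, P a * V (T bound Q v (A a))) := by
  unfold Jcost gcost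
  ring

end

theorem delta_monotone_MBS_general {N M : ℕ} (cache : Fin (N + 1) → Finset (Fin M))
    (bound : Idx cache → ℕ)
    (p : Fin (N + 1) → Fin M → ℝ)
    (w : ℝ)
    {ι : Type} [Fintype ι] (P : ι → ℝ) (A : ι → Idx cache → ℕ)
    (hP : ∀ a, 0 ≤ P a)
    (V : (Idx cache → ℕ) → ℝ)
    (hV : ∀ Q₁ Q₂ : Idx cache → ℕ, (∀ i, Q₁ i ≤ bound i) → (∀ i, Q₂ i ≤ bound i) →
      (∀ i, Q₁ i ≤ Q₂ i) → V Q₁ ≤ V Q₂)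
    (u v : Fin (N + 1) → Option (Fin M))
    (m : Fin M) (hu0 : u 0 = some m)
    (Q₁ Q₂ : Idx cache → ℕ)
    (heq : ∀ i : Idx cache,
      ¬(i.val = ((0 : Fin (N + 1)), m) ∨ (i.val.1 ≠ 0 ∧ i.val.2 = m ∧ m ∈ cache i.val.1)) →
      Q₁ i = Q₂ i)
    (hge : ∀ i : Idx cache,
      (i.val = ((0 : Fin (N + 1)), m) ∨ (i.val.1 ≠ 0 ∧ i.val.2 = m ∧ m ∈ cache i.val.1)) →
      Q₂ i ≤ Q₁ i) :
    Jcost p w bound P A V Q₁ u - Jcost p w bound P A V Q₁ v ≤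
      Jcost p w bound P A V Q₂ u - Jcost p w bound P A V Q₂ v := by
  have hle : ∀ i, Q₂ i ≤ Q₁ i := fun i => (em _).elim (hge i) fun h => (heq i h).ge
  have hTu : ∀ a, T bound Q₁ u (A a) = T bound Q₂ u (A a) := by
    refine fun a => T_eq_of_eq_of_not_served bound (fun i hs => heq i fun hi => hs ?_) (A a)
    have him : i.val.2 = m := hi.elim (congrArg Prod.snd) (·.2.1)
    exact him ▸ served_of_MBS hu0 i.val.1
  have hTv : ∑ a, P a * V (T bound Q₂ v (A a)) ≤ ∑ a, P a * V (T bound Q₁ v (A a)) :=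
    sum_le_sum fun a _ => mul_le_mul_of_nonneg_left
      (hV _ _ (T_le_bound _ _ _ _) (T_le_bound _ _ _ _) (T_mono bound hle v (A a))) (hP a)
  rw [Jcost_sub_Jcost, Jcost_sub_Jcost]
  simp only [hTu]
  linarith

/-- Lemma 3(1): monotonicity of `Δ_{u,v}`, Property 1: let `V` be monotone
and let `u, v ∈ 𝒰` with `u_0 = m ∈ M_0`.  If `Q¹, Q²` agree on every coordinate of `I`
outside `{(0,m)} ∪ {(n,m) : n ∈ N_m}` and `Q¹ ≥ Q²` on that set, then
`Δ_{u,v}(Q¹) ≤ Δ_{u,v}(Q²)`, i.e. `Δ_{u,v}` is non-increasing in `Q_{0,m}` and in `Q_{n,m}`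
for every `n ∈ N_m`. -/
theorem delta_monotone_MBS {N M : ℕ} (cache : Fin (N + 1) → Finset (Fin M))
    (hcache0 : ∀ m : Fin M, m ∈ cache 0)
    (bound : Idx cache → ℕ)
    (p : Fin (N + 1) → Fin M → ℝ) (hp : ∀ n m, 0 ≤ p n m)
    (w : ℝ) (hw : 0 ≤ w)
    {ι : Type} [Fintype ι] (P : ι → ℝ) (A : ι → Idx cache → ℕ)
    (hP : ∀ a, 0 ≤ P a) (hPsum : ∑ a, P a = 1)
    (V : (Idx cache → ℕ) → ℝ)
    (hV : ∀ Q₁ Q₂ : Idx cache → ℕ, (∀ i, Q₁ i ≤ bound i) → (∀ i, Q₂ i ≤ bound i) →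
      (∀ i, Q₁ i ≤ Q₂ i) → V Q₁ ≤ V Q₂)
    (u v : Fin (N + 1) → Option (Fin M)) (hu : Feasible cache u) (hv : Feasible cache v)
    (m : Fin M) (hu0 : u 0 = some m)
    (Q₁ Q₂ : Idx cache → ℕ)
    (hQ₁ : ∀ i, Q₁ i ≤ bound i) (hQ₂ : ∀ i, Q₂ i ≤ bound i)
    (heq : ∀ i : Idx cache,
      ¬(i.val = ((0 : Fin (N + 1)), m) ∨ (i.val.1 ≠ 0 ∧ i.val.2 = m ∧ m ∈ cache i.val.1)) →
      Q₁ i = Q₂ i)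
    (hge : ∀ i : Idx cache,
      (i.val = ((0 : Fin (N + 1)), m) ∨ (i.val.1 ≠ 0 ∧ i.val.2 = m ∧ m ∈ cache i.val.1)) →
      Q₂ i ≤ Q₁ i) :
    Jcost p w bound P A V Q₁ u - Jcost p w bound P A V Q₁ v ≤
      Jcost p w bound P A V Q₂ u - Jcost p w bound P A V Q₂ v :=
  delta_monotone_MBS_general cache bound p w P A hP V hV u v m hu0 Q₁ Q₂ heq hge

end HetNet
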